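/- arXiv:2402.10253 — 4 statements merged into one kernel-verified Lean document; each statement's English description precedes it below -/
import Mathlib

section
/- With Σ symmetric positive definite, μ not proportional to 𝟙, and W(μ₀) the minimizer of W Σ Wᵀ under constraints 𝟙 Wᵀ = 1 and μ Wᵀ = μ₀, the minimal variance satisfies σ²(μ₀) = W(μ₀) Σ W(μ₀)ᵀ = (1/d)[ (𝟙Σ⁻¹𝟙ᵀ) μ₀² − 2 (μΣ⁻¹𝟙ᵀ) μ₀ + μΣ⁻¹μᵀ ], where d = (μΣ⁻¹μᵀ)(𝟙Σ⁻¹𝟙ᵀ) − (μΣ⁻¹𝟙ᵀ)² > 0; in particular, σ² is a strictly convex quadratic function of μ₀. -/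
open Matrix

private lemma quad_strictConvexOn (p q r : ℝ) (hp : 0 < p) :
    StrictConvexOn ℝ Set.univ (fun x : ℝ => p * x ^ 2 + q * x + r) := by
  refine ⟨convex_univ, ?_⟩
  intro x _ y _ hxy u v hu hv huv
  simp only [smul_eq_mul]
  have hne : x - y ≠ 0 := sub_ne_zero.mpr hxy
  have h1 : 0 < (x - y) ^ 2 := lt_of_le_of_ne (sq_nonneg _) (Ne.symm (pow_ne_zero 2 hne))
  have hv' : v = 1 - u := by linarith
  subst hv'
  nlinarith [mul_pos hp (mul_pos (mul_pos hu hv) h1)]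

/-- The minimum variance frontier: the variance of the efficient portfolio with
target return `μ₀` equals `(1/d)[(𝟙Σ⁻¹𝟙)μ₀² − 2(μΣ⁻¹𝟙)μ₀ + μΣ⁻¹μ]`, where
`d > 0`; in particular it is a strictly convex quadratic function of `μ₀`. -/
theorem min_variance_frontier {n : ℕ}
    (S : Matrix (Fin n) (Fin n) ℝ)
    (hsymm : Sᵀ = S)
    (hpos : ∀ W : Fin n → ℝ, W ≠ 0 → 0 < W ⬝ᵥ S *ᵥ W)
    (m : Fin n → ℝ)
    (hm : ¬ ∃ c : ℝ, m = c • (fun _ : Fin n => (1 : ℝ))) :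
    let one : Fin n → ℝ := fun _ => 1
    let d : ℝ := (m ⬝ᵥ S⁻¹ *ᵥ m) * (one ⬝ᵥ S⁻¹ *ᵥ one) - (m ⬝ᵥ S⁻¹ *ᵥ one) ^ 2
    let M : Matrix (Fin 2) (Fin 2) ℝ :=
      !![m ⬝ᵥ S⁻¹ *ᵥ m, m ⬝ᵥ S⁻¹ *ᵥ one; one ⬝ᵥ S⁻¹ *ᵥ m, one ⬝ᵥ S⁻¹ *ᵥ one]
    let Wfun : ℝ → Fin n → ℝ := fun μ₀ =>
      (M⁻¹ *ᵥ ![μ₀, 1]) 0 • (S⁻¹ *ᵥ m) + (M⁻¹ *ᵥ ![μ₀, 1]) 1 • (S⁻¹ *ᵥ one)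
    0 < d ∧
    (∀ μ₀ : ℝ, Wfun μ₀ ⬝ᵥ S *ᵥ Wfun μ₀ =
      (1 / d) * ((one ⬝ᵥ S⁻¹ *ᵥ one) * μ₀ ^ 2
        - 2 * (m ⬝ᵥ S⁻¹ *ᵥ one) * μ₀ + m ⬝ᵥ S⁻¹ *ᵥ m)) ∧
    StrictConvexOn ℝ Set.univ (fun μ₀ : ℝ => Wfun μ₀ ⬝ᵥ S *ᵥ Wfun μ₀) := by
  intro one d M Wfun
  -- n must be positive
  rcases Nat.eq_zero_or_pos n with hn | hn
  · subst hn
    exact absurd ⟨0, funext fun i => i.elim0⟩ hm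
  -- S is positive definite
  have hherm : S.IsHermitian := by
    simpa [Matrix.IsHermitian, Matrix.conjTranspose_eq_transpose_of_trivial] using hsymm
  have hpd : S.PosDef := Matrix.PosDef.of_dotProduct_mulVec_pos hherm (fun x hx => by simpa using hpos x hx)
  have hdetS : IsUnit S.det := hpd.det_pos.ne'.isUnit
  have hS1 : S * S⁻¹ = 1 := Matrix.mul_nonsing_inv S hdetS
  have hinvsymm : (S⁻¹)ᵀ = S⁻¹ := by
    rw [Matrix.transpose_nonsing_inv, hsymm]
  -- quadratic form positivity for S⁻¹
  have hq : ∀ x : Fin n → ℝ, x ≠ 0 → 0 < x ⬝ᵥ S⁻¹ *ᵥ x := fun x hx => by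
    simpa using hpd.inv.dotProduct_mulVec_pos hx
  -- symmetry of the S⁻¹ bilinear form
  have hsym : ∀ x y : Fin n → ℝ, x ⬝ᵥ S⁻¹ *ᵥ y = y ⬝ᵥ S⁻¹ *ᵥ x := by
    intro x y
    rw [Matrix.dotProduct_mulVec, ← Matrix.mulVec_transpose, hinvsymm, dotProduct_comm]
  set a : ℝ := m ⬝ᵥ S⁻¹ *ᵥ m with ha_def
  set b : ℝ := m ⬝ᵥ S⁻¹ *ᵥ one with hb_def
  set c : ℝ := one ⬝ᵥ S⁻¹ *ᵥ one with hc_def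
  have hb' : one ⬝ᵥ S⁻¹ *ᵥ m = b := hsym one m
  have hone : one ≠ 0 := by
    intro h
    exact one_ne_zero (congrFun h ⟨0, hn⟩)
  have hc : 0 < c := hq one hone
  -- d > 0
  have hd : 0 < d := by
    set t : ℝ := b / c with ht
    have hv : m - t • one ≠ 0 := by
      intro h
      exact hm ⟨t, by rwa [sub_eq_zero] at h⟩
    have hqv := hq _ hv
    have hexp : (m - t • one) ⬝ᵥ S⁻¹ *ᵥ (m - t • one) = a - 2 * t * b + t ^ 2 * c := by
      simp only [sub_dotProduct, dotProduct_sub, Matrix.mulVec_sub, Matrix.mulVec_smul,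
        smul_dotProduct, dotProduct_smul, smul_eq_mul, hb']
      rw [← ha_def, ← hb_def, ← hc_def]
      ring
    rw [hexp] at hqv
    have hkey : c * (a - 2 * t * b + t ^ 2 * c) = a * c - b ^ 2 := by
      rw [ht]; field_simp; ring
    have : (0:ℝ) < a * c - b ^ 2 := hkey ▸ mul_pos hc hqv
    exact this
  have hdne : d ≠ 0 := hd.ne'
  -- inverse of M
  have hdet : M.det = d := by
    show (!![a, b; one ⬝ᵥ S⁻¹ *ᵥ m, c]).det = a * c - b ^ 2
    rw [Matrix.det_fin_two_of, hb']
    ring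
  have hMinv : M⁻¹ = d⁻¹ • !![c, -b; -b, a] := by
    rw [Matrix.inv_def, hdet, Ring.inverse_eq_inv']
    congr 1
    show (!![a, b; one ⬝ᵥ S⁻¹ *ᵥ m, c]).adjugate = _
    rw [hb', Matrix.adjugate_fin_two_of]
  have h0 : ∀ μ₀ : ℝ, (M⁻¹ *ᵥ ![μ₀, 1]) 0 = d⁻¹ * (c * μ₀ - b) := by
    intro μ₀
    simp [hMinv, Matrix.mulVec, dotProduct, Fin.sum_univ_two]
    ring
  have h1 : ∀ μ₀ : ℝ, (M⁻¹ *ᵥ ![μ₀, 1]) 1 = d⁻¹ * (a - b * μ₀) := by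
    intro μ₀
    simp [hMinv, Matrix.mulVec, dotProduct, Fin.sum_univ_two]
    ring
  -- the variance formula
  have hform : ∀ μ₀ : ℝ, Wfun μ₀ ⬝ᵥ S *ᵥ Wfun μ₀ =
      (1 / d) * (c * μ₀ ^ 2 - 2 * b * μ₀ + a) := by
    intro μ₀
    have hSu : S *ᵥ (S⁻¹ *ᵥ m) = m := by
      rw [Matrix.mulVec_mulVec, hS1, Matrix.one_mulVec]
    have hSv : S *ᵥ (S⁻¹ *ᵥ one) = one := by
      rw [Matrix.mulVec_mulVec, hS1, Matrix.one_mulVec]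
    have hum : (S⁻¹ *ᵥ m) ⬝ᵥ m = a := dotProduct_comm _ _
    have huo : (S⁻¹ *ᵥ m) ⬝ᵥ one = b := by
      rw [dotProduct_comm]; exact hb'
    have hvm : (S⁻¹ *ᵥ one) ⬝ᵥ m = b := by
      rw [dotProduct_comm, hb_def]
    have hvo : (S⁻¹ *ᵥ one) ⬝ᵥ one = c := dotProduct_comm _ _
    have expand : Wfun μ₀ ⬝ᵥ S *ᵥ Wfun μ₀ =
        ((M⁻¹ *ᵥ ![μ₀, 1]) 0) ^ 2 * a
          + 2 * ((M⁻¹ *ᵥ ![μ₀, 1]) 0 * (M⁻¹ *ᵥ ![μ₀, 1]) 1) * b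
          + ((M⁻¹ *ᵥ ![μ₀, 1]) 1) ^ 2 * c := by
      show ((M⁻¹ *ᵥ ![μ₀, 1]) 0 • (S⁻¹ *ᵥ m) + (M⁻¹ *ᵥ ![μ₀, 1]) 1 • (S⁻¹ *ᵥ one)) ⬝ᵥ
        S *ᵥ ((M⁻¹ *ᵥ ![μ₀, 1]) 0 • (S⁻¹ *ᵥ m) + (M⁻¹ *ᵥ ![μ₀, 1]) 1 • (S⁻¹ *ᵥ one)) = _
      rw [Matrix.mulVec_add, Matrix.mulVec_smul, Matrix.mulVec_smul, hSu, hSv]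
      simp only [add_dotProduct, dotProduct_add, smul_dotProduct, dotProduct_smul,
        smul_eq_mul, hum, hvm, hvo]
      rw [dotProduct_comm (S⁻¹ *ᵥ m) one, hb']
      ring
    rw [expand, h0 μ₀, h1 μ₀]
    field_simp
    ring
  refine ⟨hd, fun μ₀ => hform μ₀, ?_⟩
  have heq : (fun μ₀ : ℝ => Wfun μ₀ ⬝ᵥ S *ᵥ Wfun μ₀) =
      fun x : ℝ => (c / d) * x ^ 2 + (-2 * b / d) * x + a / d := by
    funext x
    rw [hform x]
    field_simp
    ring
  rw [heq]
  exact quad_strictConvexOn _ _ _ (div_pos hc hd)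
end

section
/- Let Σ be symmetric positive definite, μ̃ ∈ ℝ^n nonzero, and suppose 𝟙 Σ⁻¹ μ̃ᵀ ≠ 0. If W satisfies both μ̃ Wᵀ = μ̃₀, Wᵀ = μ̃₀ Σ⁻¹μ̃ᵀ/(μ̃Σ⁻¹μ̃ᵀ) (the risk-free-inclusive minimizer) and the full-investment constraint 𝟙 Wᵀ = 1, then μ̃₀ = (μ̃Σ⁻¹μ̃ᵀ)/(𝟙Σ⁻¹μ̃ᵀ) and W equals the maximal-Sharpe-ratio (tangency) portfolio Wᵀ = Σ⁻¹μ̃ᵀ/(𝟙Σ⁻¹μ̃ᵀ). -/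
open Matrix

/-- The capital market line touches the risky efficient frontier at the
tangency portfolio: if the risk-free-inclusive minimizer satisfies the full
investment constraint, then its target excess return is `μ̃Σ⁻¹μ̃/(𝟙Σ⁻¹μ̃)` and
it equals the maximal-Sharpe-ratio portfolio. -/
theorem tangency_point {n : ℕ}
    (S : Matrix (Fin n) (Fin n) ℝ)
    (hsymm : Sᵀ = S)
    (hpos : ∀ W : Fin n → ℝ, W ≠ 0 → 0 < W ⬝ᵥ S *ᵥ W)
    (m : Fin n → ℝ) (hm : m ≠ 0)
    (hc : (fun _ : Fin n => (1 : ℝ)) ⬝ᵥ S⁻¹ *ᵥ m ≠ 0)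
    (t₀ : ℝ) (W : Fin n → ℝ)
    (hW : W = (t₀ / (m ⬝ᵥ S⁻¹ *ᵥ m)) • (S⁻¹ *ᵥ m))
    (hbudget : (fun _ : Fin n => (1 : ℝ)) ⬝ᵥ W = 1) :
    t₀ = (m ⬝ᵥ S⁻¹ *ᵥ m) / ((fun _ : Fin n => (1 : ℝ)) ⬝ᵥ S⁻¹ *ᵥ m) ∧
    W = (1 / ((fun _ : Fin n => (1 : ℝ)) ⬝ᵥ S⁻¹ *ᵥ m)) • (S⁻¹ *ᵥ m) := by
  have hpd : S.PosDef := by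
    refine Matrix.posDef_iff_dotProduct_mulVec.mpr ⟨?_, fun x hx => by simpa using hpos x hx⟩
    rw [Matrix.IsHermitian]
    simpa using hsymm
  have hdet : IsUnit S.det := isUnit_iff_isUnit_det S |>.mp hpd.isUnit
  set x := S⁻¹ *ᵥ m with hx
  have hSx : S *ᵥ x = m := by
    rw [hx, Matrix.mulVec_mulVec, Matrix.mul_nonsing_inv S hdet, Matrix.one_mulVec]
  have hxne : x ≠ 0 := by
    intro h
    apply hm
    rw [← hSx, h, Matrix.mulVec_zero]
  have hq : 0 < m ⬝ᵥ x := by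
    rw [dotProduct_comm, ← hSx]
    exact hpos x hxne
  have hqne : m ⬝ᵥ x ≠ 0 := ne_of_gt hq
  set c : ℝ := (fun _ : Fin n => (1 : ℝ)) ⬝ᵥ x with hcdef
  have hb : t₀ / (m ⬝ᵥ x) * c = 1 := by
    rw [hcdef]
    rw [hW] at hbudget
    simpa [dotProduct_smul, smul_eq_mul, mul_comm] using hbudget
  have ht : t₀ = (m ⬝ᵥ x) / c := by
    field_simp at hb ⊢
    linarith [hb]
  refine ⟨ht, ?_⟩
  rw [hW, ht]
  congr 1
  field_simp
end

section
/- Let W(μ₀)ᵀ = (Σ⁻¹μᵀ, Σ⁻¹𝟙ᵀ) M⁻¹ (μ₀, 1)ᵀ denote the efficient portfolio with target return μ₀ (Σ symmetric positive definite, M the 2×2 Gram matrix of μ, 𝟙 in the Σ⁻¹ inner product, μ not proportional to 𝟙). If w_1,…,w_m ∈ ℝ satisfy ∑_{i=1}^m w_i = 1 and μ₀₁,…,μ₀ₘ are real numbers, then ∑_{i=1}^m w_i W(μ₀ᵢ) = W(∑_{i=1}^m w_i μ₀ᵢ); i.e., an affine combination of efficient portfolios is the efficient portfolio for the corresponding affine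 combination of target returns. -/
/-!
The portfolio `W μ₀` is a fixed linear map applied to `(μ₀, 1)`, and `μ₀ ↦ (μ₀, 1)` sends an
affine combination of targets to the same affine combination of vectors.
-/

open Matrix

section AffineCombination

variable {R E ι : Type*} [CommRing R] [AddCommGroup E] [Module R E]

theorem Finset.sum_smul_vecCons_one (s : Finset ι) (w t : ι → R) (hw : ∑ i ∈ s, w i = 1) :
    ∑ i ∈ s, w i • ![t i, 1] = ![∑ i ∈ s, w i * t i, 1] := by
  ext j
  fin_cases j <;> simp [Finset.sum_apply, hw]

theorem LinearMap.sum_smul_apply_vecCons_one (L : (Fin 2 → R) →ₗ[R] E) (s : Finset ι)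
    (w t : ι → R) (hw : ∑ i ∈ s, w i = 1) :
    ∑ i ∈ s, w i • L ![t i, 1] = L ![∑ i ∈ s, w i * t i, 1] := by
  simp only [← map_smul, ← map_sum, Finset.sum_smul_vecCons_one s w t hw]

end AffineCombination

theorem mutual_fund_separation_general {n : ℕ}
    (S : Matrix (Fin n) (Fin n) ℝ)
    (m : Fin n → ℝ)
    (k : ℕ) (w : Fin k → ℝ) (hw : ∑ i, w i = 1) (t : Fin k → ℝ) :
    let one : Fin n → ℝ := fun _ => 1
    let M : Matrix (Fin 2) (Fin 2) ℝ :=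
      !![m ⬝ᵥ S⁻¹ *ᵥ m, m ⬝ᵥ S⁻¹ *ᵥ one; one ⬝ᵥ S⁻¹ *ᵥ m, one ⬝ᵥ S⁻¹ *ᵥ one]
    let Wfun : ℝ → Fin n → ℝ := fun μ₀ =>
      (M⁻¹ *ᵥ ![μ₀, 1]) 0 • (S⁻¹ *ᵥ m) + (M⁻¹ *ᵥ ![μ₀, 1]) 1 • (S⁻¹ *ᵥ one)
    ∑ i, w i • Wfun (t i) = Wfun (∑ i, w i * t i) := by
  intro one M Wfun
  let L : (Fin 2 → ℝ) →ₗ[ℝ] Fin n → ℝ :=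
    Fintype.linearCombination ℝ ![S⁻¹ *ᵥ m, S⁻¹ *ᵥ one] ∘ₗ M⁻¹.mulVecLin
  have hW : ∀ μ₀, Wfun μ₀ = L ![μ₀, 1] := fun μ₀ => by
    simp [Wfun, L, Fintype.linearCombination_apply, Fin.sum_univ_two]
  simp only [hW]
  exact L.sum_smul_apply_vecCons_one Finset.univ w t hw

/-- Mutual fund separation: an affine combination of efficient portfolios is
the efficient portfolio of the corresponding affine combination of target
returns. -/
theorem mutual_fund_separation {n : ℕ}
    (S : Matrix (Fin n) (Fin n) ℝ)
    (hsymm : Sᵀ = S)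
    (hpos : ∀ W : Fin n → ℝ, W ≠ 0 → 0 < W ⬝ᵥ S *ᵥ W)
    (m : Fin n → ℝ)
    (hm : ¬ ∃ c : ℝ, m = c • (fun _ : Fin n => (1 : ℝ)))
    (k : ℕ) (w : Fin k → ℝ) (hw : ∑ i, w i = 1) (t : Fin k → ℝ) :
    let one : Fin n → ℝ := fun _ => 1
    let M : Matrix (Fin 2) (Fin 2) ℝ :=
      !![m ⬝ᵥ S⁻¹ *ᵥ m, m ⬝ᵥ S⁻¹ *ᵥ one; one ⬝ᵥ S⁻¹ *ᵥ m, one ⬝ᵥ S⁻¹ *ᵥ one]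
    let Wfun : ℝ → Fin n → ℝ := fun μ₀ =>
      (M⁻¹ *ᵥ ![μ₀, 1]) 0 • (S⁻¹ *ᵥ m) + (M⁻¹ *ᵥ ![μ₀, 1]) 1 • (S⁻¹ *ᵥ one)
    ∑ i, w i • Wfun (t i) = Wfun (∑ i, w i * t i) :=
  mutual_fund_separation_general S m k w hw t
end

section
/- Let Σ be symmetric positive definite, 𝟙 the all-ones row vector, μ̃ ∈ ℝ^n nonzero with 𝟙Σ⁻¹μ̃ᵀ > 0, and let W* be the tangency portfolio W*ᵀ = Σ⁻¹μ̃ᵀ/(𝟙Σ⁻¹μ̃ᵀ) with σ_M = √(W*ΣW*ᵀ) and excess return μ̃_M = W*μ̃ᵀ. Then μ̃_M/σ_M = √(μ̃Σ⁻¹μ̃ᵀ); i.e., the slope of the line through (0, r_f) and (σ_M, μ_M) in the (σ, μ) plane equals the slope √(μ̃Σ⁻¹μ̃ᵀ) of the efficient frontier including the risk-free asset. -/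
open Matrix

/-- The slope of the capital market line: the excess return of the tangency
portfolio divided by its standard deviation equals `√(μ̃Σ⁻¹μ̃)`. -/
theorem tangency_slope {n : ℕ}
    (S : Matrix (Fin n) (Fin n) ℝ)
    (hsymm : Sᵀ = S)
    (hpos : ∀ W : Fin n → ℝ, W ≠ 0 → 0 < W ⬝ᵥ S *ᵥ W)
    (m : Fin n → ℝ) (hm : m ≠ 0)
    (hc : 0 < (fun _ : Fin n => (1 : ℝ)) ⬝ᵥ S⁻¹ *ᵥ m) :
    let c : ℝ := (fun _ : Fin n => (1 : ℝ)) ⬝ᵥ S⁻¹ *ᵥ m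
    let Wstar : Fin n → ℝ := (1 / c) • (S⁻¹ *ᵥ m)
    (Wstar ⬝ᵥ m) / Real.sqrt (Wstar ⬝ᵥ S *ᵥ Wstar) =
      Real.sqrt (m ⬝ᵥ S⁻¹ *ᵥ m) := by
  intro c Wstar
  -- S is invertible
  have hunit : IsUnit S := by
    rw [← Matrix.mulVec_injective_iff_isUnit]
    intro x y hxy
    by_contra hne
    have h : x - y ≠ 0 := sub_ne_zero.mpr hne
    have := hpos (x - y) h
    rw [Matrix.mulVec_sub, hxy, sub_self, dotProduct_zero] at this
    exact lt_irrefl 0 this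
  have hdet : IsUnit S.det := (Matrix.isUnit_iff_isUnit_det S).mp hunit
  have hSS : S * S⁻¹ = 1 := Matrix.mul_nonsing_inv S hdet
  set v : Fin n → ℝ := S⁻¹ *ᵥ m with hv
  have hSv : S *ᵥ v = m := by
    rw [hv, Matrix.mulVec_mulVec, hSS, Matrix.one_mulVec]
  have hvne : v ≠ 0 := by
    intro h
    apply hm
    rw [← hSv, h, Matrix.mulVec_zero]
  have hq : 0 < m ⬝ᵥ v := by
    have := hpos v hvne
    rwa [hSv, dotProduct_comm] at this
  have hcne : c ≠ 0 := ne_of_gt hc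
  have h1 : Wstar ⬝ᵥ m = (1 / c) * (m ⬝ᵥ v) := by
    simp [Wstar, smul_dotProduct, dotProduct_comm, v]
  have h2 : Wstar ⬝ᵥ S *ᵥ Wstar = (1 / c) ^ 2 * (m ⬝ᵥ v) := by
    simp only [Wstar, ← hv, smul_dotProduct, Matrix.mulVec_smul, dotProduct_smul, hSv]
    rw [dotProduct_comm, smul_eq_mul, smul_eq_mul]
    ring
  rw [h1, h2, Real.sqrt_mul (by positivity), Real.sqrt_sq (by positivity),
    mul_div_mul_left _ _ (by positivity : (0:ℝ) < 1/c).ne', Real.div_sqrt]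
end
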